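/- Let σ be a non-identity permutation of {1,...,n}, and let i, j be misplaced under σ (i.e., (i−j)(σ(i)−σ(j)) < 0). Let σ' be σ with the values σ(i) and σ(j) swapped. Then Σₖ (k − σ'(k))² < Σₖ (k − σ(k))², so each swap of a misplaced pair strictly decreases n·GDM. -/

import Mathlib

open Finset Equiv

section SwapSums

variable {α M R : Type*} [Fintype α] [DecidableEq α]

theorem sum_apply_swap_add [AddCommMonoid M] (φ : α → α → M) (i j : α) :
    ∑ k, φ k (swap i j k) + (φ i i + φ j j) = ∑ k, φ k k + (φ i j + φ j i) := by
  rcases eq_or_ne i j with rfl | hij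
  · simp
  have h_off : ∑ k ∈ {i, j}ᶜ, φ k (swap i j k) = ∑ k ∈ {i, j}ᶜ, φ k k := by
    refine sum_congr rfl fun k hk => ?_
    simp only [mem_compl, mem_insert, mem_singleton, not_or] at hk
    rw [swap_apply_of_ne_of_ne hk.1 hk.2]
  rw [← sum_compl_add_sum {i, j}, ← sum_compl_add_sum {i, j} (fun k => φ k k), h_off,
    sum_pair hij, sum_pair hij, swap_apply_left, swap_apply_right]
  abel

theorem sum_sub_comp_swap_sq [CommRing R] (f g : α → R) (i j : α) :
    ∑ k, (f k - g (swap i j k)) ^ 2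
      = ∑ k, (f k - g k) ^ 2 + 2 * ((f i - f j) * (g i - g j)) := by
  linear_combination sum_apply_swap_add (fun k l => (f k - g l) ^ 2) i j

end SwapSums

theorem swap_decreases_disorder_general (n : ℕ) (σ : Equiv.Perm (Fin n)) (i j : Fin n)
    (hmis : (((i : ℕ) : ℝ) - ((j : ℕ) : ℝ)) * (((σ i : ℕ) : ℝ) - ((σ j : ℕ) : ℝ)) < 0) :
    ∑ k : Fin n, (((k : ℕ) : ℝ) - (((σ * Equiv.swap i j) k : ℕ) : ℝ)) ^ 2
      < ∑ k : Fin n, (((k : ℕ) : ℝ) - ((σ k : ℕ) : ℝ)) ^ 2 := by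
  simp only [Perm.mul_apply]
  rw [sum_sub_comp_swap_sq (fun k : Fin n => ((k : ℕ) : ℝ)) (fun k => ((σ k : ℕ) : ℝ))]
  linarith

/-- Swapping the values `σ(i)` and `σ(j)` of a misplaced pair strictly decreases `n·GDM`. -/
theorem swap_decreases_disorder (n : ℕ) (σ : Equiv.Perm (Fin n))
    (hσ : σ ≠ Equiv.refl (Fin n)) (i j : Fin n)
    (hmis : (((i : ℕ) : ℝ) - ((j : ℕ) : ℝ)) * (((σ i : ℕ) : ℝ) - ((σ j : ℕ) : ℝ)) < 0) :
    ∑ k : Fin n, (((k : ℕ) : ℝ) - (((σ * Equiv.swap i j) k : ℕ) : ℝ)) ^ 2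
      < ∑ k : Fin n, (((k : ℕ) : ℝ) - ((σ k : ℕ) : ℝ)) ^ 2 :=
  swap_decreases_disorder_general n σ i j hmis
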